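/- The sum over all digits A ∈ 𝒜 of the total variation of the derivative h_A' on [0,1] is finite; in particular, for every (a,ε)_s ∈ 𝒜 the total variation of h_{(a,ε)_s}' on [0,1] is at most 4/a², and the series Σ_{A∈𝒜} Var_{[0,1]}(h_A') converges. -/

import Mathlib

open MeasureTheory Real Set Filter Topology

namespace SCF

/-- The involution `ι(x) = (1−x)/(1+x)`. -/
noncomputable def iota (x : ℝ) : ℝ := (1 - x) / (1 + x)

/-- Even continued-fraction step.  For `y ∈ (0,1/2]` one has
`⌊(1/y+1)/2⌋ = k` whenever `1/y ∈ (2k−1, 2k+1)`, so `Te y = |1/y − 2k|`;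
explicitly `Te y = 1/y − 2` on `[1/3,1/2]`, `Te y = 1/y − 2k` on
`[1/(2k+1), 1/(2k))` and `Te y = 2k − 1/y` on `[1/(2k), 1/(2k−1))` (`k ≥ 2`). -/
noncomputable def Te (y : ℝ) : ℝ := |1 / y - 2 * (⌊(1 / y + 1) / 2⌋ : ℝ)|

/-- The spliced continued fraction (SCF) map `T : [0,1] → [0,1]`, with
`T 0 = 0`, `T 1 = 1`.  On `(0,1/2]` it is the even continued fraction map
(see `Te`), and on `(1/2,1)` it is the odd–odd map, which is the conjugate
`ι ∘ Te ∘ ι` of the even map; this agrees with the branchwise definition: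
`T x = (k x − (k−1))/(k − (k+1) x)` on `((k−1)/k, (2k−1)/(2k+1)]` and
`T x = (k − (k+1) x)/(k x − (k−1))` on `((2k−1)/(2k+1), k/(k+1)]` for `k ≥ 2`. -/
noncomputable def T (x : ℝ) : ℝ :=
  if x ≤ 0 then 0
  else if 1 ≤ x then 1
  else if x ≤ 1 / 2 then Te x
  else iota (Te (iota x))

/-- Parity label of a digit: `e` (even cusp) or `o` (odd–odd cusp). -/
inductive Par | e | o
deriving DecidableEq

/-- A candidate SCF digit `(a, ε)_s`. -/
structure Digit where
  a : ℤ
  eps : ℤ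
  s : Par
deriving DecidableEq

/-- The digit set `𝒜 = {(k,ε)_s : k ≥ 2, ε = ±1, s ∈ {e,o}} ∪ {(1,+1)_e}`. -/
def Digit.Valid (d : Digit) : Prop :=
  (2 ≤ d.a ∧ (d.eps = 1 ∨ d.eps = -1)) ∨ (d.a = 1 ∧ d.eps = 1 ∧ d.s = Par.e)

/-- The branch intervals `I_{(a,ε)_s}` of the SCF map. -/
noncomputable def branch (d : Digit) : Set ℝ :=
  match d.s with
  | Par.e =>
      if d.a = 1 then Set.Icc (1/3 : ℝ) (1/2)
      else if d.eps = 1 then Set.Ico (1 / (2 * (d.a : ℝ) + 1)) (1 / (2 * (d.a : ℝ)))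
      else Set.Ico (1 / (2 * (d.a : ℝ))) (1 / (2 * (d.a : ℝ) - 1))
  | Par.o =>
      if d.eps = 1 then
        Set.Ioc ((2 * (d.a : ℝ) - 1) / (2 * (d.a : ℝ) + 1)) ((d.a : ℝ) / ((d.a : ℝ) + 1))
      else
        Set.Ioc (((d.a : ℝ) - 1) / (d.a : ℝ)) ((2 * (d.a : ℝ) - 1) / (2 * (d.a : ℝ) + 1))

open Classical in
/-- The SCF digit of a point `y` (the unique valid digit `d` with `y ∈ I_d`;
well defined for every `y ∈ (0,1)`). -/
noncomputable def digit (y : ℝ) : Digit :=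
  if h : ∃ d : Digit, d.Valid ∧ y ∈ branch d then h.choose else ⟨1, 1, Par.e⟩

/-- The `n`-th SCF digit `(a_n(x), ε_n(x))_{s_n(x)}` of `x`, `n ≥ 1`,
determined by `T^[n−1] x ∈ I_{(a_n,ε_n)_{s_n}}`. -/
noncomputable def dig (n : ℕ) (x : ℝ) : Digit := digit (T^[n - 1] x)

/-- The `n`-th SCF partial quotient `a_n(x)`. -/
noncomputable def a (n : ℕ) (x : ℝ) : ℤ := (dig n x).a

/-- The invariant density `f_μ`. -/
noncomputable def fdens (x : ℝ) : ℝ :=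
  2 / (Real.log (2 + Real.sqrt 3) * (1 - (2 - Real.sqrt 3) * x) * (1 + Real.sqrt 3 * x))

/-- The absolutely continuous `T`-invariant probability measure `μ` on `(0,1)`. -/
noncomputable def mu : Measure ℝ :=
  (volume.restrict (Set.Ioo (0 : ℝ) 1)).withDensity fun x => ENNReal.ofReal (fdens x)

/-- The inverse branches `h_{(a,ε)_s}` of the SCF map `T`. -/
noncomputable def h (d : Digit) (x : ℝ) : ℝ :=
  match d.s with
  | Par.e => 1 / (2 * (d.a : ℝ) + (d.eps : ℝ) * x)
  | Par.o =>
      if d.eps = 1 then (((d.a : ℝ) - 1) * x + (d.a : ℝ)) / ((d.a : ℝ) * x + ((d.a : ℝ) + 1))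
      else ((d.a : ℝ) * x + ((d.a : ℝ) - 1)) / (((d.a : ℝ) + 1) * x + (d.a : ℝ))

/-- Composed inverse branch `h_{A^{(n)}} = h_{A₁} ∘ ⋯ ∘ h_{A_n}` of a word. -/
noncomputable def hWord (l : List Digit) : ℝ → ℝ :=
  l.foldr (fun d g => h d ∘ g) id

/-- The dual inverse branches `bar h_{(b,η)_t}`. -/
noncomputable def hbar (d : Digit) (y : ℝ) : ℝ :=
  match d.s with
  | Par.e => (d.eps : ℝ) / (2 * (d.a : ℝ) + y)
  | Par.o =>
      1 / (1 + (d.eps : ℝ) / (((d.a : ℝ) - ((max 0 d.eps : ℤ) : ℝ)) + 1 / (1 + y)))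

/-- The matrix `M_{(a,ε)_s}` associated with the inverse branch `h_{(a,ε)_s}`. -/
noncomputable def Mdig (d : Digit) : Matrix (Fin 2) (Fin 2) ℝ :=
  match d.s with
  | Par.e => !![0, 1; (d.eps : ℝ), 2 * (d.a : ℝ)]
  | Par.o =>
      !![(d.a : ℝ) - ((max 0 d.eps : ℤ) : ℝ), (d.a : ℝ) - ((max 0 d.eps : ℤ) : ℝ) + (d.eps : ℝ);
         (d.a : ℝ) - ((max 0 d.eps : ℤ) : ℝ) + 1, (d.a : ℝ) - ((max 0 d.eps : ℤ) : ℝ) + (d.eps : ℝ) + 1]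

/-- `M_n(x) = M_{(a₁,ε₁)_{s₁}} ⋯ M_{(a_n,ε_n)_{s_n}}`. -/
noncomputable def Mn (n : ℕ) (x : ℝ) : Matrix (Fin 2) (Fin 2) ℝ :=
  ((List.range n).map fun i => Mdig (digit (T^[i] x))).prod

/-- `P_n(x)`: the `(1,2)`-entry of `M_n(x)` (numerator of the `n`-th convergent). -/
noncomputable def Pc (n : ℕ) (x : ℝ) : ℝ := Mn n x 0 1

/-- `Q_n(x)`: the `(2,2)`-entry of `M_n(x)` (denominator of the `n`-th convergent). -/
noncomputable def Qc (n : ℕ) (x : ℝ) : ℝ := Mn n x 1 1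

/-!
Every inverse branch is the Möbius map of its matrix `Mdig d`, whose determinant is `-ε = ±1`,
so `h_d'(x) = ±1 / (r x + s)²`, where the denominator `r x + s` is affine and at least `a` on
`[0,1]`. Such a derivative is monotone on `[0,1]` with values in an interval of length `1/a²`,
so its variation there is at most `1/a² ≤ 4/a²`. At most four digits share the same `a`, and
`∑ 1/a²` converges.
-/

noncomputable def mobius (M : Matrix (Fin 2) (Fin 2) ℝ) (x : ℝ) : ℝ :=
  (M 0 0 * x + M 0 1) / (M 1 0 * x + M 1 1)

lemma hasDerivAt_mobius (M : Matrix (Fin 2) (Fin 2) ℝ) {x : ℝ} (hx : M 1 0 * x + M 1 1 ≠ 0) :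
    HasDerivAt (mobius M) (M.det / (M 1 0 * x + M 1 1) ^ 2) x := by
  have := (((hasDerivAt_id x).const_mul (M 0 0)).add_const (M 0 1)).div
    (((hasDerivAt_id x).const_mul (M 1 0)).add_const (M 1 1)) hx
  simp only [id, mul_one] at this
  exact this.congr_deriv (by rw [Matrix.det_fin_two]; ring)

section Variation

variable {α : Type*} [LinearOrder α]

lemma eVariationOn_neg (f : α → ℝ) (s : Set α) :
    eVariationOn (fun x => -f x) s = eVariationOn f s := by
  simp only [eVariationOn, edist_neg_neg]

lemma eVariationOn_Icc_le_of_mapsTo {f : α → ℝ} {a b : α} {lo hi : ℝ} (hab : a ≤ b)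
    (hf : MonotoneOn f (Icc a b) ∨ AntitoneOn f (Icc a b))
    (hmaps : MapsTo f (Icc a b) (Icc lo hi)) :
    eVariationOn f (Icc a b) ≤ ENNReal.ofReal (hi - lo) := by
  have ha : a ∈ Icc a b := left_mem_Icc.2 hab
  have hb : b ∈ Icc a b := right_mem_Icc.2 hab
  rcases hf with hmono | hanti
  · rw [← inter_self (Icc a b), hmono.eVariationOn_eq ha hb]
    exact ENNReal.ofReal_le_ofReal (sub_le_sub (hmaps hb).2 (hmaps ha).1)
  · rw [← eVariationOn_neg, ← inter_self (Icc a b), hanti.neg.eVariationOn_eq ha hb]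
    exact ENNReal.ofReal_le_ofReal (by linarith [(hmaps hb).1, (hmaps ha).2])

end Variation

lemma monotoneOn_or_antitoneOn_inv_sq_affine {r s : ℝ} {S : Set ℝ}
    (hpos : ∀ x ∈ S, 0 < r * x + s) :
    MonotoneOn (fun x => ((r * x + s) ^ 2)⁻¹) S ∨
      AntitoneOn (fun x => ((r * x + s) ^ 2)⁻¹) S := by
  rcases le_total r 0 with hr | hr
  · refine Or.inl fun x _ y hy hxy => ?_
    have := hpos y hy
    have : r * y ≤ r * x := mul_le_mul_of_nonpos_left hxy hr
    dsimp only
    gcongr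
  · refine Or.inr fun x hx y _ hxy => ?_
    have := hpos x hx
    dsimp only
    gcongr

lemma eVariationOn_deriv_mobius_le (M : Matrix (Fin 2) (Fin 2) ℝ) {m : ℝ} (hm : 0 < m)
    (hden : ∀ x ∈ Icc (0 : ℝ) 1, m ≤ M 1 0 * x + M 1 1) :
    eVariationOn (deriv (mobius M)) (Icc 0 1) ≤ ENNReal.ofReal (|M.det| / m ^ 2) := by
  set u : ℝ → ℝ := fun x => ((M 1 0 * x + M 1 1) ^ 2)⁻¹
  have hderiv : EqOn (deriv (mobius M)) ((M.det * ·) ∘ u) (Icc 0 1) := fun x hx =>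
    (hasDerivAt_mobius M (hm.trans_le (hden x hx)).ne').deriv
  have hu : eVariationOn u (Icc 0 1) ≤ ENNReal.ofReal ((m ^ 2)⁻¹) := by
    have := eVariationOn_Icc_le_of_mapsTo (f := u) (lo := 0) (hi := (m ^ 2)⁻¹) zero_le_one
      (monotoneOn_or_antitoneOn_inv_sq_affine fun x hx => hm.trans_le (hden x hx))
      fun x hx =>
        ⟨by positivity, inv_anti₀ (by positivity) (pow_le_pow_left₀ hm.le (hden x hx) 2)⟩
    rwa [sub_zero] at this
  calc eVariationOn (deriv (mobius M)) (Icc 0 1)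
      = eVariationOn ((M.det * ·) ∘ u) (Icc 0 1) := eVariationOn.eq_of_eqOn hderiv
    _ ≤ ‖M.det‖₊ * eVariationOn u (Icc 0 1) :=
        (lipschitzWith_smul M.det).lipschitzOnWith.comp_eVariationOn_le (mapsTo_univ _ _)
    _ ≤ ‖M.det‖₊ * ENNReal.ofReal ((m ^ 2)⁻¹) := by gcongr
    _ = ENNReal.ofReal (|M.det| / m ^ 2) := by
        rw [div_eq_mul_inv, ENNReal.ofReal_mul (abs_nonneg _), ← Real.enorm_eq_ofReal_abs]
        rfl

lemma Digit.Valid.one_le_a {d : Digit} (hd : d.Valid) : 1 ≤ d.a := by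
  rcases hd with ⟨h, _⟩ | ⟨h, _⟩ <;> omega

lemma Digit.Valid.eps_eq_one_or {d : Digit} (hd : d.Valid) : d.eps = 1 ∨ d.eps = -1 := by
  rcases hd with ⟨_, h⟩ | ⟨_, h, _⟩
  exacts [h, Or.inl h]

lemma h_eq_mobius_Mdig {d : Digit} (hd : d.Valid) : h d = mobius (Mdig d) := by
  obtain ⟨a, eps, s⟩ := d
  funext x
  cases s
  · simp [h, Mdig, mobius, add_comm]
  · rcases hd.eps_eq_one_or with rfl | rfl <;> simp [h, Mdig, mobius, ← sub_eq_add_neg]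

lemma det_Mdig (d : Digit) : (Mdig d).det = -d.eps := by
  rcases d with ⟨a, eps, _ | _⟩ <;> simp only [Mdig, Matrix.det_fin_two_of] <;> ring

lemma a_le_Mdig_denom {d : Digit} (hd : d.Valid) {x : ℝ} (hx : x ∈ Icc (0 : ℝ) 1) :
    (d.a : ℝ) ≤ Mdig d 1 0 * x + Mdig d 1 1 := by
  obtain ⟨a, eps, s⟩ := d
  have ha : (1 : ℝ) ≤ a := by exact_mod_cast hd.one_le_a
  rcases hd.eps_eq_one_or with rfl | rfl <;> cases s <;> norm_num [Mdig] <;>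
    nlinarith [hx.1, hx.2]

lemma eVariationOn_deriv_h_le {d : Digit} (hd : d.Valid) :
    eVariationOn (deriv (h d)) (Icc 0 1) ≤ ENNReal.ofReal (1 / (d.a : ℝ) ^ 2) := by
  have ha : (0 : ℝ) < d.a := by exact_mod_cast hd.one_le_a
  have hdet : |(Mdig d).det| = 1 := by
    rcases hd.eps_eq_one_or with heps | heps <;> simp [det_Mdig, heps]
  simpa [h_eq_mobius_Mdig hd, hdet] using
    eVariationOn_deriv_mobius_le (Mdig d) ha fun x hx => a_le_Mdig_denom hd hx

def Digit.code (d : Digit) : ℤ × Bool × Bool := (d.a, d.eps = 1, d.s = Par.e)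

lemma Digit.code_injective : Function.Injective fun d : {d : Digit // d.Valid} => d.1.code := by
  rintro ⟨⟨a, eps, s⟩, hd⟩ ⟨⟨a', eps', s'⟩, hd'⟩ hcode
  simp only [Digit.code, Prod.mk.injEq, decide_eq_decide] at hcode
  obtain ⟨rfl, heps, hs⟩ := hcode
  have : eps = eps' := by
    rcases hd.eps_eq_one_or with rfl | rfl <;> rcases hd'.eps_eq_one_or with rfl | rfl <;> simp_all
  have : s = s' := by cases s <;> cases s' <;> simp_all
  subst_vars
  rfl

lemma tsum_ofReal_one_div_a_sq_ne_top :
    ∑' d : {d : Digit // d.Valid}, ENNReal.ofReal (1 / (d.1.a : ℝ) ^ 2) ≠ ⊤ := by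
  have hint : ∑' n : ℤ, ENNReal.ofReal (1 / (n : ℝ) ^ 2) ≠ ⊤ := by
    rw [← ENNReal.ofReal_tsum_of_nonneg (fun _ => by positivity)
      (summable_one_div_int_pow.2 one_lt_two)]
    exact ENNReal.ofReal_ne_top
  refine ne_top_of_le_ne_top ?_ (ENNReal.tsum_comp_le_tsum_of_injective Digit.code_injective
    fun p => ENNReal.ofReal (1 / (p.1 : ℝ) ^ 2))
  simp only [ENNReal.tsum_prod', tsum_fintype, Finset.sum_const, Finset.card_univ, nsmul_eq_mul,
    ENNReal.tsum_mul_left]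
  exact ENNReal.mul_ne_top (ENNReal.natCast_ne_top _) hint

/-- the total variations of the derivatives of the inverse
branches are summable: `Var_{[0,1]}(h_{(a,ε)_s}') ≤ 4/a²` for each digit and
`Σ_{A ∈ 𝒜} Var_{[0,1]}(h_A') < ∞`. -/
theorem variation_of_branches_summable :
    (∀ d : Digit, d.Valid →
      eVariationOn (deriv (h d)) (Set.Icc (0 : ℝ) 1) ≤ ENNReal.ofReal (4 / (d.a : ℝ) ^ 2)) ∧
    (∑' d : {d : Digit // d.Valid}, eVariationOn (deriv (h d.1)) (Set.Icc (0 : ℝ) 1)) ≠ ⊤ := by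
  refine ⟨fun d hd => (eVariationOn_deriv_h_le hd).trans (ENNReal.ofReal_le_ofReal ?_), ?_⟩
  · gcongr
    norm_num
  · exact ne_top_of_le_ne_top tsum_ofReal_one_div_a_sq_ne_top
      (ENNReal.tsum_le_tsum fun d => eVariationOn_deriv_h_le d.2)

end SCF
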